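/- Let (λ_n)_{n∈ℕ} be a sequence of non-zero complex numbers such that liminf_{n→∞} |λ_{n+1}|/|λ_n| > 2. Then there is no entire function f : ℂ → ℂ such that for every b ∈ ℂ \ {0} the set {z ↦ f(z + λ_n·b) : n ∈ ℕ} is dense in the space of entire functions with the topology of locally uniform convergence; equivalently, there is no entire f such that for every non-zero b, every entire g : ℂ → ℂ, every R > 0 and every ε > 0 there exists n with sup_{|z| ≤ R} |f(z + λ_n·b) − g(z)| < ε. -/

import Mathlib

/-!
Test the hypercyclicity of `f` against `g z = z + c` in real directions `b ∈ [1, 2]`. If both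
`f (· + λₙ x)` and `f (· + λₙ y)` approximate `g` within `ε` on the disc of radius `R` and
`|λₙ| |x - y| ≤ 2R`, evaluating both at the midpoint of `λₙ x` and `λₙ y` gives
`|λₙ| |x - y| < 2ε`. So inside every window of length `2R / |λₙ|` the directions served by `n`
form a cluster of diameter `< 2ε / |λₙ|`. As `|λₙ₊₁| ≥ q |λₙ|` with `q > 2` eventually, cutting
this cluster out of such a window leaves an interval of length `2R / |λₙ₊₁|`, and nested intervals
yield a direction in `[1, 2]` served by no large index. Taking `c` far from the values of `f` on
a compact set excludes the finitely many small indices.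
-/

open Filter Set

lemma exists_growth_of_lt_liminf_ratio (r : ℕ → ℝ) (hr : ∀ n, 0 < r n) {c : ℝ}
    (h : (c : EReal) < liminf (fun n => ((r (n + 1) / r n : ℝ) : EReal)) atTop) :
    ∃ q : ℝ, c < q ∧ ∀ᶠ n in atTop, q * r n ≤ r (n + 1) := by
  obtain ⟨q, hcq, hq⟩ := EReal.exists_between_coe_real h
  refine ⟨q, EReal.coe_lt_coe_iff.1 hcq, ?_⟩
  filter_upwards [eventually_lt_of_lt_liminf hq] with n hn
  exact ((lt_div_iff₀ (hr n)).1 (EReal.coe_lt_coe_iff.1 hn)).le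

lemma exists_Icc_subset_disjoint {B : Set ℝ} {ℓ ℓ' d : ℝ}
    (hB : ∀ x ∈ B, ∀ y ∈ B, |x - y| ≤ ℓ → |x - y| < d)
    (hℓ' : 0 ≤ ℓ') (hd : 0 ≤ d) (hshrink : ℓ' ≤ (ℓ - 2 * d) / 2) (u : ℝ) :
    ∃ u', Icc u' (u' + ℓ') ⊆ Icc u (u + ℓ) ∧ Disjoint (Icc u' (u' + ℓ')) B := by
  by_cases hp : ∃ p ∈ B, p ∈ Icc u (u + ℓ)
  · obtain ⟨p, hpB, hpu, hpv⟩ := hp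
    -- within the window, `B` lies in `(p - d, p + d)`; keep the longer of the two remaining pieces
    have hnear : ∀ x ∈ B, x ∈ Icc u (u + ℓ) → |x - p| < d := fun x hxB hx =>
      hB x hxB p hpB (abs_sub_le_iff.2 ⟨by linarith [hx.2], by linarith [hx.1]⟩)
    by_cases hleft : u + ℓ' ≤ p - d
    · refine ⟨u, Icc_subset_Icc le_rfl (by linarith), disjoint_left.2 fun x hx hxB => ?_⟩
      have := abs_lt.1 (hnear x hxB ⟨hx.1, by linarith [hx.2]⟩)
      linarith [hx.2]
    · refine ⟨u + ℓ - ℓ', Icc_subset_Icc (by linarith) (by linarith),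
        disjoint_left.2 fun x hx hxB => ?_⟩
      have := abs_lt.1 (hnear x hxB ⟨by linarith [hx.1], by linarith [hx.2]⟩)
      linarith [hx.1]
  · push Not at hp
    have hsub : Icc u (u + ℓ') ⊆ Icc u (u + ℓ) := Icc_subset_Icc le_rfl (by linarith)
    exact ⟨u, hsub, disjoint_left.2 fun x hx hxB => hp x hxB (hsub hx)⟩

lemma exists_mem_Icc_forall_notMem (B : ℕ → Set ℝ) (ℓ d : ℕ → ℝ)
    (hB : ∀ n, ∀ x ∈ B n, ∀ y ∈ B n, |x - y| ≤ ℓ n → |x - y| < d n)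
    (hℓ : ∀ n, 0 ≤ ℓ n) (hd : ∀ n, 0 ≤ d n) (hshrink : ∀ n, ℓ (n + 1) ≤ (ℓ n - 2 * d n) / 2)
    (u : ℝ) : ∃ x ∈ Icc u (u + ℓ 0), ∀ n, x ∉ B n := by
  choose next hsub hdisj using fun n =>
    exists_Icc_subset_disjoint (hB n) (hℓ (n + 1)) (hd n) (hshrink n)
  let left : ℕ → ℝ := fun n => Nat.rec u next n
  obtain ⟨x, hx⟩ := IsCompact.nonempty_iInter_of_sequence_nonempty_isCompact_isClosed
    (fun n => Icc (left n) (left n + ℓ n)) (fun n => hsub n (left n))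
    (fun n => nonempty_Icc.2 (by linarith [hℓ n])) isCompact_Icc (fun _ => isClosed_Icc)
  rw [mem_iInter] at hx
  exact ⟨x, hx 0, fun n => disjoint_left.1 (hdisj n (left n)) (hx (n + 1))⟩

lemma exists_mem_Icc_forall_notMem_of_growth (B : ℕ → Set ℝ) (a : ℕ → ℝ) {q L δ : ℝ}
    (ha : ∀ n, 0 < a n) (hq : 0 < q) (hgrowth : ∀ n, q * a n ≤ a (n + 1))
    (hL : 0 ≤ L) (hδ : 0 ≤ δ) (hqδ : 2 * q * δ ≤ (q - 2) * L)
    (hB : ∀ n, ∀ x ∈ B n, ∀ y ∈ B n, a n * |x - y| ≤ L → a n * |x - y| < δ) (u : ℝ) :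
    ∃ x ∈ Icc u (u + L / a 0), ∀ n, x ∉ B n := by
  refine exists_mem_Icc_forall_notMem B (fun n => L / a n) (fun n => δ / a n)
    (fun n x hx y hy h => ?_) (fun n => div_nonneg hL (ha n).le)
    (fun n => div_nonneg hδ (ha n).le) (fun n => ?_) u
  · rw [le_div_iff₀' (ha n)] at h
    rw [lt_div_iff₀' (ha n)]
    exact hB n x hx y hy h
  · have hq2δ : 2 * L ≤ q * (L - 2 * δ) := by linarith
    calc L / a (n + 1) ≤ L / (q * a n) :=
          div_le_div_of_nonneg_left hL (mul_pos hq (ha n)) (hgrowth n)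
      _ ≤ (L - 2 * δ) / (2 * a n) := by
        rw [div_le_div_iff₀ (mul_pos hq (ha n)) (by linarith [ha n])]
        nlinarith [ha n]
      _ = (L / a n - 2 * (δ / a n)) / 2 := by field_simp

lemma norm_sub_lt_of_approx_add_const {E : Type*} [NormedAddCommGroup E] [NormedSpace ℝ E]
    (f : E → E) {c w w' : E} {R ε : ℝ}
    (hw : ∀ z, ‖z‖ ≤ R → ‖f (z + w) - (z + c)‖ < ε)
    (hw' : ∀ z, ‖z‖ ≤ R → ‖f (z + w') - (z + c)‖ < ε) (hclose : ‖w - w'‖ ≤ 2 * R) :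
    ‖w - w'‖ < 2 * ε := by
  -- both conditions evaluate `f` at the midpoint of `w` and `w'`
  set z : E := (1 / 2 : ℝ) • (w - w')
  have hzz : z + z = w - w' := by rw [← two_smul ℝ, smul_smul]; norm_num
  have hz : ‖z‖ ≤ R := by
    rw [norm_smul, Real.norm_of_nonneg (by norm_num)]; linarith
  have hmid : -z + w = z + w' := by
    rw [show w = z + z + w' by rw [hzz]; abel]; abel
  calc ‖w - w'‖ = ‖(f (-z + w) - (-z + c)) - (f (z + w') - (z + c))‖ := by
        rw [hmid, ← hzz]; congr 1; abel
    _ ≤ ‖f (-z + w) - (-z + c)‖ + ‖f (z + w') - (z + c)‖ := norm_sub_le _ _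
    _ < ε + ε := add_lt_add (hw (-z) (by rwa [norm_neg])) (hw' z hz)
    _ = 2 * ε := by ring

lemma IsCompact.exists_forall_le_norm_sub {X E : Type*} [TopologicalSpace X]
    [NormedAddCommGroup E] [NormedSpace ℝ E] [Nontrivial E] {K : Set X} (hK : IsCompact K)
    {f : X → E} (hf : ContinuousOn f K) (ε : ℝ) : ∃ c : E, ∀ x ∈ K, ε ≤ ‖f x - c‖ := by
  obtain ⟨S, hS⟩ := hK.exists_bound_of_continuousOn hf
  obtain ⟨c, hc⟩ := exists_norm_eq E (by positivity : 0 ≤ |S| + |ε|)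
  refine ⟨c, fun x hx => ?_⟩
  have := norm_sub_norm_le c (f x)
  rw [norm_sub_rev, hc] at this
  linarith [hS x hx, le_abs_self S, le_abs_self ε]

/-- Non-existence of a common hypercyclic entire function for the families of
translations `(T_{λ_n b})`, `b ≠ 0`, when `liminf |λ_{n+1}|/|λ_n| > 2`. -/
theorem no_common_hypercyclic
    (lam : ℕ → ℂ) (hlam : ∀ n, lam n ≠ 0)
    (hliminf : (2 : EReal) <
      Filter.liminf (fun n => ((‖lam (n + 1)‖ / ‖lam n‖ : ℝ) : EReal)) Filter.atTop) :
    ¬ ∃ f : ℂ → ℂ, Differentiable ℂ f ∧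
      ∀ b : ℂ, b ≠ 0 → ∀ g : ℂ → ℂ, Differentiable ℂ g →
        ∀ R > (0 : ℝ), ∀ ε > (0 : ℝ), ∃ n : ℕ,
          ∀ z : ℂ, ‖z‖ ≤ R → ‖f (z + lam n * b) - g z‖ < ε := by
  rintro ⟨f, hf, H⟩
  have hnorm : ∀ n, 0 < ‖lam n‖ := fun n => norm_pos_iff.2 (hlam n)
  obtain ⟨q, hq, hgrowth⟩ := exists_growth_of_lt_liminf_ratio (fun n => ‖lam n‖) hnorm
    (c := 2) (by exact_mod_cast hliminf)
  obtain ⟨N, hN⟩ := eventually_atTop.1 hgrowth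
  set a : ℕ → ℝ := fun n => ‖lam (N + n)‖
  have ha0 : 0 < a 0 := hnorm N
  set ε : ℝ := (q - 2) * a 0 / (4 * q) with hε_def
  have hε : 0 < ε := div_pos (mul_pos (by linarith) ha0) (by linarith)
  have hqε : 4 * q * ε = (q - 2) * a 0 := by rw [hε_def]; field_simp
  -- the target `z + c` is chosen so far from the values of `f` that indices below `N` cannot serve
  have hK : IsCompact (⋃ k ∈ Finset.range N, (fun x : ℝ => lam k * x) '' Icc 1 2) :=
    (Finset.range N).isCompact_biUnion fun k _ => isCompact_Icc.image (by fun_prop)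
  obtain ⟨c, hc⟩ := hK.exists_forall_le_norm_sub hf.continuous.continuousOn ε
  let B : ℕ → Set ℝ := fun n => {x | ∀ z : ℂ, ‖z‖ ≤ a 0 / 2 → ‖f (z + lam n * x) - (z + c)‖ < ε}
  have hgrid : ∀ n, ∀ x ∈ B (N + n), ∀ y ∈ B (N + n),
      a n * |x - y| ≤ a 0 → a n * |x - y| < 2 * ε := by
    intro n x hx y hy hxy
    have hdist : ‖lam (N + n) * x - lam (N + n) * y‖ = a n * |x - y| := by
      rw [← mul_sub, norm_mul, ← Complex.ofReal_sub, Complex.norm_real, Real.norm_eq_abs]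
    rw [← hdist] at hxy ⊢
    exact norm_sub_lt_of_approx_add_const f hx hy (by linarith)
  obtain ⟨x, hx, hxB⟩ := exists_mem_Icc_forall_notMem_of_growth (fun n => B (N + n)) a
    (L := a 0) (fun n => hnorm (N + n)) (by linarith) (fun n => hN (N + n) (Nat.le_add_right N n))
    ha0.le (by linarith) (by linarith) hgrid 1
  rw [div_self ha0.ne', one_add_one_eq_two] at hx
  obtain ⟨n, hn⟩ := H x (Complex.ofReal_ne_zero.2 (by linarith [hx.1])) (fun z => z + c)
    (differentiable_id.add_const c) (a 0 / 2) (by linarith) ε hε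
  by_cases hNn : N ≤ n
  · obtain ⟨k, rfl⟩ := Nat.exists_eq_add_of_le hNn
    exact hxB k hn
  · have hfar := hc _ (mem_biUnion (x := n) (Finset.mem_range.2 (by omega)) ⟨x, hx, rfl⟩)
    simpa using hfar.not_gt (by simpa using hn 0 (by rw [norm_zero]; positivity))
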